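/- Let (Q, c) be a colored gentle quiver, β a dimension vector, r a rank map for β, ε a sign function on (Q, c), and Γ = Γ_{Q,c}(β, r, ε) the associated up-and-down graph. Let p = v_j^x eₙ v_{iₙ₋₁}^{xₙ₋₁} ⋯ e₁ v_i^y be a left positive direct path in Γ (so xₙ = x, x₀ = y, and ε(x, c(w(eₙ))) = 1), and let j < j′ ≤ β(x). Then there exists a left positive direct path p′ = v_{j′}^x e′ₙ v_{i′ₙ₋₁}^{xₙ₋₁} ⋯ e′₁ v_{i′}^y in Γ with w(e′_k) = w(e_k) for all k, and moreover i′ > i if and only if ε(y, c(w(e₁))) = −1, and i′ < i if and only if ε(y, c(w(e₁))) = 1. -/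
import Mathlib


section Defs

variable {V A S : Type}

/-- `c` is a coloring of the quiver `(tl, hd)`: each color class is the arrow set of a
directed path (enumerated by a duplicate-free list chained head-to-tail). -/
def IsColoring (tl hd : A → V) (c : A → S) : Prop :=
  ∀ s : S, ∃ l : List A, l.Nodup ∧ (∀ a : A, a ∈ l ↔ c a = s) ∧
    l.Chain' (fun a b => hd a = tl b)

/-- Some arrow of color `s` is incident to vertex `x`. -/
def Incident (tl hd : A → V) (c : A → S) (x : V) (s : S) : Prop :=
  ∃ a : A, c a = s ∧ (tl a = x ∨ hd a = x)

/-- `(Q, c)` is a colored gentle quiver: `c` is a coloring, at most two colors are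
incident to each vertex, and for each vertex and color there is at most one arrow of
that color with that tail and at most one with that head. -/
def ColoredGentle (tl hd : A → V) (c : A → S) : Prop :=
  IsColoring tl hd c ∧
  (∀ (x : V) (s₁ s₂ s₃ : S), Incident tl hd c x s₁ → Incident tl hd c x s₂ →
    Incident tl hd c x s₃ → s₁ = s₂ ∨ s₁ = s₃ ∨ s₂ = s₃) ∧
  (∀ (x : V) (s : S) (a b : A), tl a = x → tl b = x → c a = s → c b = s → a = b) ∧
  (∀ (x : V) (s : S) (a b : A), hd a = x → hd b = x → c a = s → c b = s → a = b)

/-- `r` is a rank map for the dimension vector `β`. -/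
def IsRankMap (tl hd : A → V) (c : A → S) (β : V → ℕ) (r : A → ℕ) : Prop :=
  (∀ a : A, r a ≤ min (β (tl a)) (β (hd a))) ∧
  (∀ a₁ a₂ : A, hd a₁ = tl a₂ → c a₁ = c a₂ → r a₂ + r a₁ ≤ β (hd a₁))

/-- `r` is a maximal rank map for `β`. -/
def MaximalRankMap (tl hd : A → V) (c : A → S) (β : V → ℕ) (r : A → ℕ) : Prop :=
  IsRankMap tl hd c β r ∧
  ¬ ∃ r' : A → ℕ, IsRankMap tl hd c β r' ∧ (∀ a : A, r a ≤ r' a) ∧ r' ≠ r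

/-- `ε` is a sign function on `(Q, c)` (its values only matter on incident pairs). -/
def IsSignFun (tl hd : A → V) (c : A → S) (ε : V → S → ℤ) : Prop :=
  (∀ x s, Incident tl hd c x s → ε x s = 1 ∨ ε x s = -1) ∧
  (∀ x s₁ s₂, Incident tl hd c x s₁ → Incident tl hd c x s₂ → s₁ ≠ s₂ →
    ε x s₁ = - ε x s₂)

/-- Index (at level `tl a`) of the tail endpoint of the edge `e(a, i)`. -/
def srcIdx (tl : A → V) (β : V → ℕ) (c : A → S) (ε : V → S → ℤ) (a : A) (i : ℕ) : ℕ :=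
  if ε (tl a) (c a) = 1 then i else β (tl a) - i + 1

/-- Index (at level `hd a`) of the head endpoint of the edge `e(a, i)`. -/
def tgtIdx (hd : A → V) (β : V → ℕ) (c : A → S) (ε : V → S → ℤ) (a : A) (i : ℕ) : ℕ :=
  if ε (hd a) (c a) = -1 then i else β (hd a) - i + 1

/-- The vertex `v_j^x` is contained in the edge `e(a, i)` of the up-and-down graph. -/
def InEdge (tl hd : A → V) (β : V → ℕ) (c : A → S) (ε : V → S → ℤ) (r : A → ℕ)
    (a : A) (i : ℕ) (x : V) (j : ℕ) : Prop :=
  1 ≤ i ∧ i ≤ r a ∧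
    ((x = tl a ∧ j = srcIdx tl β c ε a i) ∨ (x = hd a ∧ j = tgtIdx hd β c ε a i))

/-- The vertices `p` and `q` are joined by an edge labeled `a` in the up-and-down graph. -/
def UDJoined (tl hd : A → V) (β : V → ℕ) (c : A → S) (ε : V → S → ℤ) (r : A → ℕ)
    (a : A) (p q : V × ℕ) : Prop :=
  ∃ i : ℕ, 1 ≤ i ∧ i ≤ r a ∧
    ((p = (tl a, srcIdx tl β c ε a i) ∧ q = (hd a, tgtIdx hd β c ε a i)) ∨
     (q = (tl a, srcIdx tl β c ε a i) ∧ p = (hd a, tgtIdx hd β c ε a i)))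

/-- Adjacency in the up-and-down graph. -/
def UDAdj (tl hd : A → V) (β : V → ℕ) (c : A → S) (ε : V → S → ℤ) (r : A → ℕ)
    (p q : V × ℕ) : Prop :=
  ∃ a : A, UDJoined tl hd β c ε r a p q

/-- A direct path of length `n` in the up-and-down graph: position `k` of the path is the
vertex `v_{idx k}^{xs k}`, and the `k`-th edge is the edge `e(as k, ids k)`, whose tail
endpoint is at position `k` and whose head endpoint is at position `k+1`. -/
def IsDirectPath (tl hd : A → V) (β : V → ℕ) (c : A → S) (ε : V → S → ℤ) (r : A → ℕ)
    (n : ℕ) (xs : Fin (n+1) → V) (as : Fin n → A) (ids : Fin n → ℕ)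
    (idx : Fin (n+1) → ℕ) : Prop :=
  ∀ k : Fin n, 1 ≤ ids k ∧ ids k ≤ r (as k) ∧
    tl (as k) = xs k.castSucc ∧ hd (as k) = xs k.succ ∧
    idx k.castSucc = srcIdx tl β c ε (as k) (ids k) ∧
    idx k.succ = tgtIdx hd β c ε (as k) (ids k)

end Defs
/-- Lemma 2.7 B: sliding a left positive direct path to a higher top
index `j < j' ≤ β(x)` yields a parallel left positive direct path with the same arrow
labels, whose bottom endpoint moves down iff `ε(y, c(w(e₁))) = -1` and up iff it is `1`. -/
theorem updown_slide_left_positive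
    {V A S : Type} [Fintype V] [Fintype A] [Fintype S]
    (tl hd : A → V) (c : A → S) (β : V → ℕ) (r : A → ℕ) (ε : V → S → ℤ)
    (hg : ColoredGentle tl hd c) (hr : IsRankMap tl hd c β r)
    (hε : IsSignFun tl hd c ε)
    (n : ℕ) (hn : 1 ≤ n)
    (xs : Fin (n+1) → V) (as : Fin n → A) (ids : Fin n → ℕ) (idx : Fin (n+1) → ℕ)
    (hpath : IsDirectPath tl hd β c ε r n xs as ids idx)
    (hpos : ε (xs (Fin.last n)) (c (as ⟨n-1, by omega⟩)) = 1)
    (j' : ℕ) (hj'1 : idx (Fin.last n) < j') (hj'2 : j' ≤ β (xs (Fin.last n))) :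
    ∃ (ids' : Fin n → ℕ) (idx' : Fin (n+1) → ℕ),
      IsDirectPath tl hd β c ε r n xs as ids' idx' ∧
      idx' (Fin.last n) = j' ∧
      (idx' 0 > idx 0 ↔ ε (xs 0) (c (as ⟨0, by omega⟩)) = -1) ∧
      (idx' 0 < idx 0 ↔ ε (xs 0) (c (as ⟨0, by omega⟩)) = 1) := by
  obtain ⟨hε1, hε2⟩ := hε
  obtain ⟨hr1, hr2⟩ := hr
  -- sign of each incident pair is ±1
  have sgn_t : ∀ k : Fin n, ε (xs k.castSucc) (c (as k)) = 1 ∨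
      ε (xs k.castSucc) (c (as k)) = -1 :=
    fun k => hε1 _ _ ⟨_, rfl, Or.inl (hpath k).2.2.1⟩
  have sgn_h : ∀ k : Fin n, ε (xs k.succ) (c (as k)) = 1 ∨
      ε (xs k.succ) (c (as k)) = -1 :=
    fun k => hε1 _ _ ⟨_, rfl, Or.inr (hpath k).2.2.2.1⟩
  -- computation rules for srcIdx / tgtIdx in terms of signs at path vertices
  have src_pos : ∀ k : Fin n, ∀ i : ℕ, ε (xs k.castSucc) (c (as k)) = 1 →
      srcIdx tl β c ε (as k) i = i := by
    intro k i h
    unfold srcIdx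
    rw [(hpath k).2.2.1, if_pos h]
  have src_neg : ∀ k : Fin n, ∀ i : ℕ, ε (xs k.castSucc) (c (as k)) = -1 →
      srcIdx tl β c ε (as k) i = β (xs k.castSucc) - i + 1 := by
    intro k i h
    unfold srcIdx
    rw [(hpath k).2.2.1, if_neg (by rw [h]; norm_num)]
  have tgt_pos : ∀ k : Fin n, ∀ i : ℕ, ε (xs k.succ) (c (as k)) = 1 →
      tgtIdx hd β c ε (as k) i = β (xs k.succ) - i + 1 := by
    intro k i h
    unfold tgtIdx
    rw [(hpath k).2.2.2.1, if_neg (by rw [h]; norm_num)]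
  have tgt_neg : ∀ k : Fin n, ∀ i : ℕ, ε (xs k.succ) (c (as k)) = -1 →
      tgtIdx hd β c ε (as k) i = i := by
    intro k i h
    unfold tgtIdx
    rw [(hpath k).2.2.2.1, if_pos h]
  -- bounds
  have bnd : ∀ k : Fin n, r (as k) ≤ β (xs k.castSucc) ∧ r (as k) ≤ β (xs k.succ) := by
    intro k
    have h1 := le_trans (hr1 (as k)) (min_le_left _ _)
    have h2 := le_trans (hr1 (as k)) (min_le_right _ _)
    have l1 := congrArg β (hpath k).2.2.1
    have l2 := congrArg β (hpath k).2.2.2.1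
    omega
  -- consecutive edges: equal indices, opposite signs at the middle vertex
  have hconsec : ∀ k k' : Fin n, (k : ℕ) + 1 = (k' : ℕ) →
      ids k = ids k' ∧
      ε (xs k'.castSucc) (c (as k)) = - ε (xs k'.castSucc) (c (as k')) := by
    intro k k' hkk'
    have hv : k.succ = k'.castSucc := Fin.ext (by simp [hkk'])
    have lε : ε (xs k.succ) (c (as k)) = ε (xs k'.castSucc) (c (as k)) :=
      congrArg (fun t => ε (xs t) (c (as k))) hv
    have lβ : β (xs k.succ) = β (xs k'.castSucc) :=
      congrArg (fun t => β (xs t)) hv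
    have lidx : idx k.succ = idx k'.castSucc := congrArg idx hv
    have hsrc := (hpath k').2.2.2.2.1
    have htgt := (hpath k).2.2.2.2.2
    have hb := bnd k
    have hb' := bnd k'
    have hlo := (hpath k).1
    have hhi := (hpath k).2.1
    have hlo' := (hpath k').1
    have hhi' := (hpath k').2.1
    have hne : c (as k) ≠ c (as k') := by
      intro heq
      have hrank := hr2 (as k) (as k')
        (((hpath k).2.2.2.1.trans (congrArg xs hv)).trans (hpath k').2.2.1.symm) heq
      have lrank := congrArg β (hpath k).2.2.2.1
      have lc : ε (xs k'.castSucc) (c (as k)) = ε (xs k'.castSucc) (c (as k')) :=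
        congrArg (ε (xs k'.castSucc)) heq
      rcases sgn_h k with hs | hs
      · have hs' : ε (xs k'.castSucc) (c (as k')) = 1 := by omega
        have e1 := tgt_pos k (ids k) hs
        have e2 := src_pos k' (ids k') hs'
        omega
      · have hs' : ε (xs k'.castSucc) (c (as k')) = -1 := by omega
        have e1 := tgt_neg k (ids k) hs
        have e2 := src_neg k' (ids k') hs'
        omega
    have inc1 : Incident tl hd c (xs k'.castSucc) (c (as k)) :=
      ⟨_, rfl, Or.inr ((hpath k).2.2.2.1.trans (congrArg xs hv))⟩
    have inc2 : Incident tl hd c (xs k'.castSucc) (c (as k')) :=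
      ⟨_, rfl, Or.inl (hpath k').2.2.1⟩
    have hsgn := hε2 _ _ _ inc1 inc2 hne
    refine ⟨?_, hsgn⟩
    rcases sgn_h k with hs | hs
    · have hs' : ε (xs k'.castSucc) (c (as k')) = -1 := by omega
      have e1 := tgt_pos k (ids k) hs
      have e2 := src_neg k' (ids k') hs'
      omega
    · have hs' : ε (xs k'.castSucc) (c (as k')) = 1 := by omega
      have e1 := tgt_neg k (ids k) hs
      have e2 := src_pos k' (ids k') hs'
      omega
  -- all edge indices along the path are equal
  have hconst : ∀ k k' : Fin n, (k : ℕ) ≤ (k' : ℕ) → ids k = ids k' := by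
    intro k k' hle
    obtain ⟨t, ht⟩ : ∃ t, (k : ℕ) + t = (k' : ℕ) := ⟨(k' : ℕ) - (k : ℕ), by omega⟩
    clear hle
    induction t generalizing k with
    | zero => exact congrArg ids (Fin.ext (by omega))
    | succ t ih =>
      have hklt := k'.isLt
      have hmid : (k : ℕ) + 1 < n := by omega
      have h1 := (hconsec k ⟨(k : ℕ) + 1, hmid⟩ rfl).1
      exact h1.trans (ih ⟨(k : ℕ) + 1, hmid⟩ (by simp; omega))
  -- facts about the last edge
  have hn1 : n - 1 < n := by omega
  have hlast : ((⟨n-1, hn1⟩ : Fin n)).succ = Fin.last n := Fin.ext (by simp; omega)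
  have hpos' : ε (xs ((⟨n-1, hn1⟩ : Fin n)).succ) (c (as ⟨n-1, hn1⟩)) = 1 := by
    rw [hlast]; exact hpos
  have htop : idx ((⟨n-1, hn1⟩ : Fin n)).succ
      = β (xs ((⟨n-1, hn1⟩ : Fin n)).succ) - ids ⟨n-1, hn1⟩ + 1 :=
    (hpath ⟨n-1, hn1⟩).2.2.2.2.2.trans (tgt_pos _ _ hpos')
  have ltop : idx ((⟨n-1, hn1⟩ : Fin n)).succ = idx (Fin.last n) := congrArg idx hlast
  have lβtop : β (xs ((⟨n-1, hn1⟩ : Fin n)).succ) = β (xs (Fin.last n)) :=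
    congrArg (fun t => β (xs t)) hlast
  have hbl := bnd ⟨n-1, hn1⟩
  have hil := (hpath (⟨n-1, hn1⟩ : Fin n)).1
  have hih := (hpath (⟨n-1, hn1⟩ : Fin n)).2.1
  have hdlt : j' - idx (Fin.last n) < ids ⟨n-1, hn1⟩ := by omega
  have hd1 : 1 ≤ j' - idx (Fin.last n) := by omega
  refine ⟨fun k => ids k - (j' - idx (Fin.last n)),
    fun k => if h : (k : ℕ) < n then
        srcIdx tl β c ε (as ⟨k, h⟩) (ids ⟨k, h⟩ - (j' - idx (Fin.last n))) else j',
    ?_, ?_, ?_, ?_⟩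
  · -- the slid path is a direct path
    intro k
    have hkl : ids k = ids ⟨n-1, hn1⟩ := hconst k ⟨n-1, hn1⟩ (by simp; omega)
    have hk1 := (hpath k).1
    have hk2 := (hpath k).2.1
    refine ⟨?_, ?_, (hpath k).2.2.1, (hpath k).2.2.2.1, ?_, ?_⟩
    · show 1 ≤ ids k - (j' - idx (Fin.last n)); omega
    · show ids k - (j' - idx (Fin.last n)) ≤ r (as k); omega
    · have hc : ((k.castSucc : Fin (n+1)) : ℕ) < n := by simpa using k.isLt
      beta_reduce
      rw [dif_pos hc]
      rw [show (⟨(↑(k.castSucc) : ℕ), hc⟩ : Fin n) = k from Fin.ext (by simp)]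
    · rcases Nat.lt_or_ge ((k : ℕ) + 1) n with hlt | hge
      · -- interior vertex
        have hc : ((k.succ : Fin (n+1)) : ℕ) < n := by simpa using hlt
        beta_reduce
        rw [dif_pos hc]
        rw [show (⟨(↑(k.succ) : ℕ), hc⟩ : Fin n) = (⟨(k : ℕ) + 1, hlt⟩ : Fin n) from
          Fin.ext (by simp)]
        have hkk' : (k : ℕ) + 1 = ((⟨(k : ℕ) + 1, hlt⟩ : Fin n) : ℕ) := rfl
        obtain ⟨hideq, hsgn⟩ := hconsec k ⟨(k : ℕ) + 1, hlt⟩ hkk'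
        have hv : k.succ = (⟨(k : ℕ) + 1, hlt⟩ : Fin n).castSucc := Fin.ext (by simp)
        have lε : ε (xs k.succ) (c (as k))
            = ε (xs ((⟨(k : ℕ) + 1, hlt⟩ : Fin n)).castSucc) (c (as k)) :=
          congrArg (fun t => ε (xs t) (c (as k))) hv
        have lβ : β (xs k.succ) = β (xs ((⟨(k : ℕ) + 1, hlt⟩ : Fin n)).castSucc) :=
          congrArg (fun t => β (xs t)) hv
        have hkl' : ids (⟨(k : ℕ) + 1, hlt⟩ : Fin n) = ids ⟨n-1, hn1⟩ :=
          hconst _ _ (by simp; omega)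
        have hb := bnd k
        have hb' := bnd (⟨(k : ℕ) + 1, hlt⟩ : Fin n)
        have hlo' := (hpath (⟨(k : ℕ) + 1, hlt⟩ : Fin n)).1
        rcases sgn_t (⟨(k : ℕ) + 1, hlt⟩ : Fin n) with hs | hs
        · have e1 := src_pos (⟨(k : ℕ) + 1, hlt⟩ : Fin n)
            (ids (⟨(k : ℕ) + 1, hlt⟩ : Fin n) - (j' - idx (Fin.last n))) hs
          have hE : ε (xs k.succ) (c (as k)) = -1 := by omega
          have e2 := tgt_neg k (ids k - (j' - idx (Fin.last n))) hE
          omega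
        · have e1 := src_neg (⟨(k : ℕ) + 1, hlt⟩ : Fin n)
            (ids (⟨(k : ℕ) + 1, hlt⟩ : Fin n) - (j' - idx (Fin.last n))) hs
          have hE : ε (xs k.succ) (c (as k)) = 1 := by omega
          have e2 := tgt_pos k (ids k - (j' - idx (Fin.last n))) hE
          omega
      · -- top vertex
        have hc : ¬ ((k.succ : Fin (n+1)) : ℕ) < n := by simp; omega
        beta_reduce
        rw [dif_neg hc]
        have hkeq : k = ⟨n-1, hn1⟩ := Fin.ext (by have := k.isLt; simp; omega)
        rw [hkeq]
        have e2 := tgt_pos (⟨n-1, hn1⟩ : Fin n)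
          (ids ⟨n-1, hn1⟩ - (j' - idx (Fin.last n))) hpos'
        omega
  · -- top index is j'
    have hcl : ¬ ((Fin.last n : Fin (n+1)) : ℕ) < n := by simp
    beta_reduce
    rw [dif_neg hcl]
  · -- first comparison at the bottom vertex
    have h0 : (0 : ℕ) < n := by omega
    have hz0 : (0 : ℕ) < n + 1 := by omega
    have hz : (0 : Fin (n+1)) = (⟨0, hz0⟩ : Fin (n+1)) := Fin.ext (by simp)
    rw [hz]
    have hc : (((⟨0, hz0⟩ : Fin (n+1))) : ℕ) < n := h0
    beta_reduce
    rw [dif_pos hc]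
    rw [show (⟨(↑(⟨0, hz0⟩ : Fin (n+1)) : ℕ), hc⟩ : Fin n) = (⟨0, h0⟩ : Fin n) from
      Fin.ext (by simp)]
    rw [show (⟨0, by omega⟩ : Fin n) = (⟨0, h0⟩ : Fin n) from Fin.ext rfl]
    have hcs : ((⟨0, h0⟩ : Fin n)).castSucc = (⟨0, hz0⟩ : Fin (n+1)) :=
      Fin.ext (by simp)
    have lidx : idx ((⟨0, h0⟩ : Fin n)).castSucc = idx (⟨0, hz0⟩ : Fin (n+1)) :=
      congrArg idx hcs
    have lε : ε (xs ((⟨0, h0⟩ : Fin n)).castSucc) (c (as ⟨0, h0⟩))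
        = ε (xs (⟨0, hz0⟩ : Fin (n+1))) (c (as ⟨0, h0⟩)) :=
      congrArg (fun t => ε (xs t) (c (as ⟨0, h0⟩))) hcs
    have q5 := (hpath (⟨0, h0⟩ : Fin n)).2.2.2.2.1
    have hb := bnd (⟨0, h0⟩ : Fin n)
    have hk1 := (hpath (⟨0, h0⟩ : Fin n)).1
    have hk2 := (hpath (⟨0, h0⟩ : Fin n)).2.1
    have hkl : ids (⟨0, h0⟩ : Fin n) = ids ⟨n-1, hn1⟩ := hconst _ _ (by simp)
    rcases sgn_t (⟨0, h0⟩ : Fin n) with hs | hs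
    · have e1 := src_pos (⟨0, h0⟩ : Fin n) (ids ⟨0, h0⟩) hs
      have e1' := src_pos (⟨0, h0⟩ : Fin n)
        (ids ⟨0, h0⟩ - (j' - idx (Fin.last n))) hs
      omega
    · have e1 := src_neg (⟨0, h0⟩ : Fin n) (ids ⟨0, h0⟩) hs
      have e1' := src_neg (⟨0, h0⟩ : Fin n)
        (ids ⟨0, h0⟩ - (j' - idx (Fin.last n))) hs
      omega
  · -- second comparison at the bottom vertex
    have h0 : (0 : ℕ) < n := by omega
    have hz0 : (0 : ℕ) < n + 1 := by omega
    have hz : (0 : Fin (n+1)) = (⟨0, hz0⟩ : Fin (n+1)) := Fin.ext (by simp)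
    rw [hz]
    have hc : (((⟨0, hz0⟩ : Fin (n+1))) : ℕ) < n := h0
    beta_reduce
    rw [dif_pos hc]
    rw [show (⟨(↑(⟨0, hz0⟩ : Fin (n+1)) : ℕ), hc⟩ : Fin n) = (⟨0, h0⟩ : Fin n) from
      Fin.ext (by simp)]
    rw [show (⟨0, by omega⟩ : Fin n) = (⟨0, h0⟩ : Fin n) from Fin.ext rfl]
    have hcs : ((⟨0, h0⟩ : Fin n)).castSucc = (⟨0, hz0⟩ : Fin (n+1)) :=
      Fin.ext (by simp)
    have lidx : idx ((⟨0, h0⟩ : Fin n)).castSucc = idx (⟨0, hz0⟩ : Fin (n+1)) :=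
      congrArg idx hcs
    have lε : ε (xs ((⟨0, h0⟩ : Fin n)).castSucc) (c (as ⟨0, h0⟩))
        = ε (xs (⟨0, hz0⟩ : Fin (n+1))) (c (as ⟨0, h0⟩)) :=
      congrArg (fun t => ε (xs t) (c (as ⟨0, h0⟩))) hcs
    have q5 := (hpath (⟨0, h0⟩ : Fin n)).2.2.2.2.1
    have hb := bnd (⟨0, h0⟩ : Fin n)
    have hk1 := (hpath (⟨0, h0⟩ : Fin n)).1
    have hk2 := (hpath (⟨0, h0⟩ : Fin n)).2.1
    have hkl : ids (⟨0, h0⟩ : Fin n) = ids ⟨n-1, hn1⟩ := hconst _ _ (by simp)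
    rcases sgn_t (⟨0, h0⟩ : Fin n) with hs | hs
    · have e1 := src_pos (⟨0, h0⟩ : Fin n) (ids ⟨0, h0⟩) hs
      have e1' := src_pos (⟨0, h0⟩ : Fin n)
        (ids ⟨0, h0⟩ - (j' - idx (Fin.last n))) hs
      omega
    · have e1 := src_neg (⟨0, h0⟩ : Fin n) (ids ⟨0, h0⟩) hs
      have e1' := src_neg (⟨0, h0⟩ : Fin n)
        (ids ⟨0, h0⟩ - (j' - idx (Fin.last n))) hs
      omega
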